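/- Let V > 0, T a positive integer, and suppose a soft-reset IF neuron receives constant input c with 0 < c ≤ V and initial potential v(0) ∈ [0, V]. Then the total spike count ∑_{t=1}^T s(t) equals ⌊(T·c + v(0))/V⌋ whenever (T·c + v(0))/V is not an integer, in particular N(T) := ∑_{t=1}^T s(t) satisfies ⌊(Tc + v(0))/V⌋ - 1 ≤ N(T) ≤ ⌊(Tc + v(0))/V⌋ in general. -/

import Mathlib

/-!
Reset by subtraction removes exactly `V` per spike, so after `T` steps the spike count `N`
satisfies the balance `N V = T c + v(0) - v(T)`. Since `0 < c ≤ V`, the potential stays in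
`[0, V]`, hence `(T c + v(0)) / V - 1 ≤ N ≤ (T c + v(0)) / V`, and an integer in such a window
is `⌊(T c + v(0)) / V⌋` or one less, the latter only when `(T c + v(0)) / V` is an integer.
-/

open Finset

theorem Int.floor_bounds_of_sub_one_le_of_le {α : Type*} [CommRing α] [LinearOrder α]
    [IsStrictOrderedRing α] [FloorRing α] {x : α} {m : ℤ} (h₁ : x - 1 ≤ m) (h₂ : (m : α) ≤ x) :
    ((¬ ∃ n : ℤ, x = n) → (m : α) = ⌊x⌋) ∧ (⌊x⌋ : α) - 1 ≤ m ∧ (m : α) ≤ ⌊x⌋ := by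
  have hm_le : m ≤ ⌊x⌋ := Int.le_floor.mpr h₂
  have hfloor_le : ⌊x⌋ ≤ m + 1 := Int.floor_le_iff.mpr (by push_cast; linarith)
  refine ⟨fun hx => ?_, by exact_mod_cast (by omega : ⌊x⌋ - 1 ≤ m), by exact_mod_cast hm_le⟩
  have hx_lt : x < m + 1 :=
    lt_of_le_of_ne (by linarith) fun h => hx ⟨m + 1, by push_cast; exact h⟩
  exact congrArg Int.cast (Int.floor_eq_iff.mpr ⟨h₂, hx_lt⟩).symm

section IntegrateAndFire

variable {V c : ℝ} {v s : ℕ → ℝ}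

theorem sum_spikes_eq_card (hs : ∀ t, 1 ≤ t → s t = if V < v (t - 1) + c then 1 else 0)
    (T : ℕ) : ∑ t ∈ Icc 1 T, s t = #{t ∈ Icc 1 T | V < v (t - 1) + c} := by
  rw [← sum_boole]
  exact sum_congr rfl fun t ht => hs t (mem_Icc.mp ht).1

theorem potential_eq (hv : ∀ t, 1 ≤ t → v t = v (t - 1) + c - s t * V) (t : ℕ) :
    v t = v 0 + t * c - (∑ i ∈ Icc 1 t, s i) * V := by
  induction t with
  | zero => simp
  | succ n ih =>
    rw [hv (n + 1) (by omega), Nat.add_sub_cancel, ih, sum_Icc_succ_top (by omega)]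
    push_cast
    ring

theorem potential_mem_Icc (hc₀ : 0 ≤ c) (hcV : c ≤ V)
    (hs : ∀ t, 1 ≤ t → s t = if V < v (t - 1) + c then 1 else 0)
    (hv : ∀ t, 1 ≤ t → v t = v (t - 1) + c - s t * V) (hv0 : 0 ≤ v 0 ∧ v 0 ≤ V) (t : ℕ) :
    0 ≤ v t ∧ v t ≤ V := by
  induction t with
  | zero => exact hv0
  | succ n ih =>
    rw [hv (n + 1) (by omega), hs (n + 1) (by omega), Nat.add_sub_cancel]
    split_ifs with hfire
    · constructor <;> linarith
    · constructor <;> linarith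

end IntegrateAndFire

theorem stmt_13_general (V : ℝ) (hV : 0 < V) (T : ℕ) (c : ℝ) (hc : 0 < c ∧ c ≤ V)
    (v s : ℕ → ℝ)
    (hs : ∀ t, 1 ≤ t → s t = if V < v (t - 1) + c then 1 else 0)
    (hv : ∀ t, 1 ≤ t → v t = v (t - 1) + c - s t * V)
    (hv0 : 0 ≤ v 0 ∧ v 0 ≤ V) :
    ((¬ ∃ n : ℤ, (T * c + v 0) / V = n) →
        (∑ t ∈ Finset.Icc 1 T, s t) = (⌊(T * c + v 0) / V⌋ : ℝ)) ∧
      (⌊(T * c + v 0) / V⌋ : ℝ) - 1 ≤ (∑ t ∈ Finset.Icc 1 T, s t) ∧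
        (∑ t ∈ Finset.Icc 1 T, s t) ≤ (⌊(T * c + v 0) / V⌋ : ℝ) := by
  obtain ⟨hvT_nonneg, hvT_le⟩ := potential_mem_Icc hc.1.le hc.2 hs hv hv0 T
  have hbalance := potential_eq hv T
  have hcount : ∑ t ∈ Icc 1 T, s t = ((#{t ∈ Icc 1 T | V < v (t - 1) + c} : ℤ) : ℝ) := by
    rw [sum_spikes_eq_card hs]
    norm_cast
  rw [hcount] at hbalance ⊢
  apply Int.floor_bounds_of_sub_one_le_of_le
  · rw [sub_le_iff_le_add, div_le_iff₀ hV]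
    linarith
  · rw [le_div_iff₀ hV]
    linarith

theorem stmt_13 (V : ℝ) (hV : 0 < V) (T : ℕ) (hT : 1 ≤ T) (c : ℝ) (hc : 0 < c ∧ c ≤ V)
    (v s : ℕ → ℝ)
    (hs : ∀ t, 1 ≤ t → s t = if V < v (t - 1) + c then 1 else 0)
    (hv : ∀ t, 1 ≤ t → v t = v (t - 1) + c - s t * V)
    (hv0 : 0 ≤ v 0 ∧ v 0 ≤ V) :
    ((¬ ∃ n : ℤ, (T * c + v 0) / V = n) →
        (∑ t ∈ Finset.Icc 1 T, s t) = (⌊(T * c + v 0) / V⌋ : ℝ)) ∧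
      (⌊(T * c + v 0) / V⌋ : ℝ) - 1 ≤ (∑ t ∈ Finset.Icc 1 T, s t) ∧
        (∑ t ∈ Finset.Icc 1 T, s t) ≤ (⌊(T * c + v 0) / V⌋ : ℝ) :=
  stmt_13_general V hV T c hc v s hs hv hv0
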